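/- arXiv:2603.02457 — 4 statements merged into one kernel-verified Lean document; each statement's English description precedes it below -/
import Mathlib

section
/- Let A = ⋃_{n∈ℕ} (-I_{2n-1}) ⊂ ℕ, where the blocks I_n are consecutive blocks partitioning the negative integers with card(I_n) = 2n (I_1 = {-1,-2}, I_2 = {-3,...,-6}, and in general I_n consists of the 2n negative integers following those of I_{n-1}). Then the lower density of A satisfies liminf_{N→∞} card(A ∩ {1,...,N})/N ≥ 1/6; in particular the lower density of A is positive. -/
open Filter

/-- The block `I_n = (n(n-1), n(n+1)] ∩ ℕ`, which has `2n` elements. -/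
def blockI (n : ℕ) : Set ℕ := {j | n * (n - 1) < j ∧ j ≤ n * (n + 1)}

/-- `A = ⋃_{m ≥ 1} I_{2m-1}`, the union of the odd-indexed blocks. -/
def Aset : Set ℕ := ⋃ m : ℕ, blockI (2 * m + 1)

/-- The union of the first `m+1` odd blocks, as a finset. -/
def Tfin (m : ℕ) : Finset ℕ :=
  (Finset.range (m + 1)).biUnion
    (fun j => Finset.Ioc ((2 * j + 1) * (2 * j)) ((2 * j + 1) * (2 * j + 2)))

lemma sum_odds (m : ℕ) : ∑ j ∈ Finset.range (m + 1), 2 * (2 * j + 1) = 2 * (m + 1) ^ 2 := by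
  induction m with
  | zero => simp
  | succ k ih => rw [Finset.sum_range_succ, ih]; ring

lemma Tfin_card (m : ℕ) : (Tfin m).card = 2 * (m + 1) ^ 2 := by
  have hdisj : ∀ i ∈ Finset.range (m + 1), ∀ j ∈ Finset.range (m + 1), i ≠ j →
      Disjoint (Finset.Ioc ((2 * i + 1) * (2 * i)) ((2 * i + 1) * (2 * i + 2)))
        (Finset.Ioc ((2 * j + 1) * (2 * j)) ((2 * j + 1) * (2 * j + 2))) := by
    have key : ∀ i j : ℕ, i < j →
        Disjoint (Finset.Ioc ((2 * i + 1) * (2 * i)) ((2 * i + 1) * (2 * i + 2)))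
          (Finset.Ioc ((2 * j + 1) * (2 * j)) ((2 * j + 1) * (2 * j + 2))) := by
      intro i j hij
      rw [Finset.disjoint_left]
      intro x hx hx'
      simp only [Finset.mem_Ioc] at hx hx'
      have h1 : i + 1 ≤ j := hij
      have : (2 * i + 1) * (2 * i + 2) ≤ (2 * j + 1) * (2 * j) := by nlinarith
      omega
    intro i hi j hj hij
    rcases lt_or_gt_of_ne hij with h | h
    · exact key i j h
    · exact (key j i h).symm
  rw [Tfin, Finset.card_biUnion hdisj]
  have : ∀ j : ℕ, (Finset.Ioc ((2 * j + 1) * (2 * j)) ((2 * j + 1) * (2 * j + 2))).card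
      = 2 * (2 * j + 1) := by
    intro j
    rw [Nat.card_Ioc]
    have : (2 * j + 1) * (2 * j + 2) = (2 * j + 1) * (2 * j) + 2 * (2 * j + 1) := by ring
    omega
  rw [Finset.sum_congr rfl (fun j _ => this j), sum_odds]

lemma Tfin_subset_Aset (m : ℕ) : (↑(Tfin m) : Set ℕ) ⊆ Aset := by
  intro x hx
  rw [Finset.mem_coe, Tfin, Finset.mem_biUnion] at hx
  simp only [Finset.mem_range, Finset.mem_Ioc] at hx
  obtain ⟨j, _, h1, h2⟩ := hx
  exact Set.mem_iUnion.2 ⟨j, by constructor <;> [simpa using h1; simpa using h2]⟩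

lemma count_lower (N : ℕ) (hN : 2 ≤ N) : N ≤ 6 * (Aset ∩ Set.Icc 1 N).ncard := by
  set m := Nat.findGreatest (fun m => (2 * m + 1) * (2 * m + 2) ≤ N) N with hm
  have h0 : (2 * 0 + 1) * (2 * 0 + 2) ≤ N := by simpa using hN
  have hle : (2 * m + 1) * (2 * m + 2) ≤ N :=
    Nat.findGreatest_spec (P := fun m => (2 * m + 1) * (2 * m + 2) ≤ N) (Nat.zero_le N) h0
  have hmN : m < N := by
    by_contra h
    push_neg at h
    have hm' : m ≤ N := Nat.findGreatest_le N
    have : m = N := le_antisymm hm' h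
    rw [this] at hle
    nlinarith
  have hlt : N < (2 * (m + 1) + 1) * (2 * (m + 1) + 2) := by
    by_contra h
    push_neg at h
    have : m + 1 ≤ Nat.findGreatest (fun m => (2 * m + 1) * (2 * m + 2) ≤ N) N :=
      Nat.le_findGreatest (by omega) h
    omega
  -- Tfin m ⊆ Aset ∩ Icc 1 N
  have hsub : (↑(Tfin m) : Set ℕ) ⊆ Aset ∩ Set.Icc 1 N := by
    intro x hx
    refine ⟨Tfin_subset_Aset m hx, ?_⟩
    simp only [Finset.mem_coe, Tfin, Finset.mem_biUnion, Finset.mem_range,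
      Finset.mem_Ioc] at hx
    obtain ⟨j, hj, h1, h2⟩ := hx
    have hj' : j ≤ m := by omega
    have : (2 * j + 1) * (2 * j + 2) ≤ (2 * m + 1) * (2 * m + 2) := by nlinarith
    exact ⟨by omega, by omega⟩
  have hfin : (Aset ∩ Set.Icc 1 N).Finite := (Set.finite_Icc 1 N).inter_of_right _
  have hcard : 2 * (m + 1) ^ 2 ≤ (Aset ∩ Set.Icc 1 N).ncard := by
    calc 2 * (m + 1) ^ 2 = (↑(Tfin m) : Set ℕ).ncard := by
          rw [Set.ncard_coe_finset, Tfin_card]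
      _ ≤ _ := Set.ncard_le_ncard hsub hfin
  nlinarith

theorem stmt_0 :
    (1 / 6 : ℝ) ≤ liminf (fun N : ℕ => ((Aset ∩ Set.Icc 1 N).ncard : ℝ) / N) atTop ∧
    0 < liminf (fun N : ℕ => ((Aset ∩ Set.Icc 1 N).ncard : ℝ) / N) atTop := by
  have hbdd : IsBoundedUnder (· ≤ ·) atTop
      (fun N : ℕ => ((Aset ∩ Set.Icc 1 N).ncard : ℝ) / N) := by
    refine isBoundedUnder_of ⟨1, fun N => ?_⟩
    rcases Nat.eq_zero_or_pos N with h | h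
    · simp [h]
    · have hfin : (Set.Icc 1 N).Finite := Set.finite_Icc 1 N
      have hc : (Aset ∩ Set.Icc 1 N).ncard ≤ N := by
        calc (Aset ∩ Set.Icc 1 N).ncard ≤ (Set.Icc 1 N).ncard :=
              Set.ncard_le_ncard Set.inter_subset_right hfin
          _ = N := by rw [← Finset.coe_Icc, Set.ncard_coe_finset, Nat.card_Icc]; omega
      rw [div_le_one (by exact_mod_cast h)]
      exact_mod_cast hc
  have hev : ∀ᶠ N : ℕ in atTop,
      (1 / 6 : ℝ) ≤ ((Aset ∩ Set.Icc 1 N).ncard : ℝ) / N := by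
    filter_upwards [eventually_ge_atTop 2] with N hN
    have h := count_lower N hN
    have hN0 : (0 : ℝ) < N := by exact_mod_cast (by omega : 0 < N)
    rw [le_div_iff₀ hN0]
    have : (N : ℝ) ≤ 6 * ((Aset ∩ Set.Icc 1 N).ncard : ℝ) := by exact_mod_cast h
    linarith
  have hmain : (1 / 6 : ℝ) ≤ liminf (fun N : ℕ => ((Aset ∩ Set.Icc 1 N).ncard : ℝ) / N) atTop :=
    le_liminf_of_le hbdd.isCoboundedUnder_ge hev
  exact ⟨hmain, lt_of_lt_of_le (by norm_num) hmain⟩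
end

section
/- Let ν : ℤ → (0,∞) be defined so that ν_n = 1 for n ≤ 0 and, on the positive integers, ν is given by consecutive blocks: for each n ∈ ℕ, a block of values 1, 2, ..., n, then 10^n copies of n+1, then n, n-1, ..., 2, 1 (blocks concatenated in order n = 1, 2, 3, ...). For k ∈ ℕ let N_k := 2·Σ_{ℓ=1}^{k} ℓ + Σ_{ℓ=1}^{k} 10^ℓ. Then ν_{N_k} = 1 and (1/N_k) Σ_{i=1}^{N_k} ν_{N_k - i} = ( (2/6)k(k+1)(k+2) + ((9k+8)·10^{k+1} − 80)/81 ) / ( k(k+1) + (10^{k+1} − 10)/9 ) > k/2. -/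
open Finset

private lemma gauss (n : ℕ) : ∑ t ∈ Ioc 0 n, (t:ℝ) = n*(n+1)/2 := by
  induction n with
  | zero => simp
  | succ m ih => rw [Finset.sum_Ioc_succ_top (Nat.zero_le m), ih]; push_cast; ring

private lemma reflSum (n : ℕ) (f : ℕ → ℝ) :
    ∑ s ∈ Ioc 0 n, f (n + 1 - s) = ∑ s ∈ Ioc 0 n, f s := by
  apply Finset.sum_nbij' (fun s => n + 1 - s) (fun s => n + 1 - s) <;>
    intro a ha <;> simp [Finset.mem_Ioc] at * <;> first | omega | (congr 1; omega)

private lemma cube_le (k : ℕ) : k ^ 3 ≤ 10 ^ k := by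
  induction k with
  | zero => norm_num
  | succ m ih =>
    have h1 : 1 ≤ 10 ^ m := Nat.one_le_pow _ _ (by norm_num)
    have h2 : m^2 ≤ m^3 := by
      rcases Nat.eq_zero_or_pos m with h | h
      · simp [h]
      · exact Nat.pow_le_pow_right h (by omega)
    have : (m+1)^3 = m^3 + 3*m^2 + 3*m + 1 := by ring
    have h3 : m ≤ m^2 := by nlinarith
    rw [this, show (10:ℕ)^(m+1) = 10^m * 10 from pow_succ 10 m]
    linarith [ih, h1, h2, h3]

private lemma shiftSum (c n : ℕ) (f : ℕ → ℝ) :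
    ∑ t ∈ Ioc c (c + n), f t = ∑ s ∈ Ioc 0 n, f (c + s) := by
  have h := Finset.map_add_left_Ioc 0 n c
  rw [add_zero] at h
  rw [← h, Finset.sum_map]
  simp [addLeftEmbedding]

section main
variable (ν : ℤ → ℝ)
variable (hblock : ∀ n : ℕ, 1 ≤ n → ∀ t : ℕ, 1 ≤ t → t ≤ 2 * n + 10 ^ n →
      ν (((n - 1) * n + ∑ m ∈ Finset.Icc 1 (n - 1), 10 ^ m + t : ℕ)) =
        if t ≤ n then (t : ℝ)
        else if t ≤ n + 10 ^ n then ((n : ℝ) + 1)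
        else ((2 * n + 10 ^ n + 1 - t : ℕ) : ℝ))

include hblock

private lemma blockSum (n : ℕ) (hn : 1 ≤ n) :
    ∑ t ∈ Ioc 0 (2*n + 10^n), ν (((n - 1) * n + ∑ m ∈ Finset.Icc 1 (n-1), 10 ^ m + t : ℕ))
      = (n:ℝ)*(n+1) + ((n:ℝ)+1) * 10^n := by
  have hp : 1 ≤ 10^n := Nat.one_le_pow _ _ (by norm_num)
  rw [← Finset.sum_Ioc_consecutive _ (Nat.zero_le (n + 10^n)) (by omega),
      ← Finset.sum_Ioc_consecutive _ (Nat.zero_le n) (by omega)]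
  have e1 : ∑ t ∈ Ioc 0 n, ν (((n - 1) * n + ∑ m ∈ Finset.Icc 1 (n-1), 10 ^ m + t : ℕ))
      = (n:ℝ)*(n+1)/2 := by
    rw [Finset.sum_congr rfl (fun t ht => ?_), gauss]
    simp only [Finset.mem_Ioc] at ht
    rw [hblock n hn t (by omega) (by omega), if_pos ht.2]
  have e2 : ∑ t ∈ Ioc n (n + 10^n), ν (((n - 1) * n + ∑ m ∈ Finset.Icc 1 (n-1), 10 ^ m + t : ℕ))
      = ((n:ℝ)+1) * 10^n := by
    have hc : ∀ t ∈ Ioc n (n + 10^n),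
        ν (((n - 1) * n + ∑ m ∈ Finset.Icc 1 (n-1), 10 ^ m + t : ℕ)) = (n:ℝ) + 1 := by
      intro t ht
      simp only [Finset.mem_Ioc] at ht
      rw [hblock n hn t (by omega) (by omega), if_neg (by omega), if_pos ht.2]
    rw [Finset.sum_congr rfl hc, Finset.sum_const, Nat.card_Ioc, Nat.add_sub_cancel_left,
      nsmul_eq_mul]
    push_cast
    ring
  have e3 : ∑ t ∈ Ioc (n + 10^n) (2*n + 10^n), ν (((n - 1) * n + ∑ m ∈ Finset.Icc 1 (n-1), 10 ^ m + t : ℕ))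
      = (n:ℝ)*(n+1)/2 := by
    have h2 : 2*n + 10^n = (n + 10^n) + n := by omega
    rw [h2, shiftSum]
    have : ∀ s ∈ Ioc 0 n, ν (((n - 1) * n + ∑ m ∈ Finset.Icc 1 (n-1), 10 ^ m + (n + 10^n + s) : ℕ))
        = ((n + 1 - s : ℕ) : ℝ) := by
      intro s hs
      simp only [Finset.mem_Ioc] at hs
      rw [hblock n hn (n + 10^n + s) (by omega) (by omega), if_neg (by omega), if_neg (by omega)]
      congr 1
      omega
    rw [Finset.sum_congr rfl this, reflSum n (fun j => ((j:ℕ):ℝ)), gauss]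
  rw [e1, e2, e3]; ring

private lemma sumN (k : ℕ) :
    ∑ j ∈ Ioc 0 (k * (k + 1) + ∑ ℓ ∈ Finset.Icc 1 k, 10 ^ ℓ), ν (j : ℕ)
      = (2 / 6) * (k : ℝ) * ((k : ℝ) + 1) * ((k : ℝ) + 2) +
          ((9 * (k : ℝ) + 8) * 10 ^ (k + 1) - 80) / 81 := by
  induction k with
  | zero => norm_num
  | succ m ih =>
    have hstep : (m+1) * (m + 2) + ∑ ℓ ∈ Finset.Icc 1 (m+1), 10 ^ ℓ
        = (m * (m + 1) + ∑ ℓ ∈ Finset.Icc 1 m, 10 ^ ℓ) + (2*(m+1) + 10^(m+1)) := by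
      rw [Finset.sum_Icc_succ_top (by omega)]
      ring
    have harg : ∀ t : ℕ, ((m+1) - 1) * (m+1) + (∑ ℓ ∈ Finset.Icc 1 ((m+1)-1), 10 ^ ℓ) + t
        = (m * (m + 1) + ∑ ℓ ∈ Finset.Icc 1 m, 10 ^ ℓ) + t := by
      intro t; simp
    have key : ∑ j ∈ Ioc 0 ((m+1) * ((m+1) + 1) + ∑ ℓ ∈ Finset.Icc 1 (m+1), 10 ^ ℓ), ν (j : ℕ)
        = (∑ j ∈ Ioc 0 (m * (m + 1) + ∑ ℓ ∈ Finset.Icc 1 m, 10 ^ ℓ), ν (j : ℕ))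
          + ((↑(m+1):ℝ)*(↑(m+1)+1) + ((↑(m+1):ℝ)+1) * 10^(m+1)) := by
      have : (m+1) * ((m+1) + 1) + ∑ ℓ ∈ Finset.Icc 1 (m+1), 10 ^ ℓ
          = (m * (m + 1) + ∑ ℓ ∈ Finset.Icc 1 m, 10 ^ ℓ) + (2*(m+1) + 10^(m+1)) := by
        rw [show (m+1) + 1 = m + 2 from rfl]; exact hstep
      rw [this, ← Finset.sum_Ioc_consecutive _ (Nat.zero_le _) (Nat.le_add_right _ _),
        shiftSum]
      congr 1
      rw [← blockSum ν hblock (m+1) (by omega)]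
      refine Finset.sum_congr rfl fun t ht => ?_
      rw [harg t]
    rw [key, ih]
    push_cast
    ring

private lemma nuN (k : ℕ) (hk : 1 ≤ k) :
    ν ((k * (k + 1) + ∑ ℓ ∈ Finset.Icc 1 k, 10 ^ ℓ : ℕ)) = 1 := by
  obtain ⟨m, rfl⟩ : ∃ m, k = m + 1 := ⟨k - 1, by omega⟩
  have hp : 1 ≤ 10^(m+1) := Nat.one_le_pow _ _ (by norm_num)
  have harg : ((m+1) - 1) * (m+1) + (∑ ℓ ∈ Finset.Icc 1 ((m+1)-1), 10 ^ ℓ) + (2*(m+1) + 10^(m+1))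
      = (m+1) * ((m+1) + 1) + ∑ ℓ ∈ Finset.Icc 1 (m+1), 10 ^ ℓ := by
    simp only [Nat.add_sub_cancel]
    rw [Finset.sum_Icc_succ_top (by omega : 1 ≤ m + 1)]
    ring
  have := hblock (m+1) (by omega) (2*(m+1) + 10^(m+1)) (by omega) (by omega)
  rw [harg] at this
  rw [this, if_neg (by omega), if_neg (by omega)]
  norm_num

end main

private lemma rangeIoc (N : ℕ) (g : ℕ → ℝ) (hN : 1 ≤ N) (h0 : g 0 = g N) :
    ∑ j ∈ Finset.range N, g j = ∑ j ∈ Ioc 0 N, g j := by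
  obtain ⟨M, rfl⟩ : ∃ M, N = M + 1 := ⟨N - 1, by omega⟩
  have hb : ∑ j ∈ Ioc 0 (M+1), g j = ∑ i ∈ Finset.range (M+1), g (i+1) := by
    apply Finset.sum_nbij' (fun j => j - 1) (fun i => i + 1) <;> intro a ha <;>
      simp [Finset.mem_Ioc, Finset.mem_range] at * <;> first | omega | (congr 1; omega)
  rw [hb, Finset.sum_range_succ (fun i => g (i+1)) M, Finset.sum_range_succ' g M, h0]

private lemma geomCast (k : ℕ) :
    ((∑ ℓ ∈ Finset.Icc 1 k, 10 ^ ℓ : ℕ) : ℝ) = (10 ^ (k+1) - 10) / 9 := by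
  induction k with
  | zero => simp
  | succ m ih =>
    rw [Finset.sum_Icc_succ_top (by omega : 1 ≤ m + 1)]
    push_cast
    push_cast at ih
    rw [ih]
    ring

theorem stmt_4 (ν : ℤ → ℝ) (hpos : ∀ j, 0 < ν j)
    (h0 : ∀ j : ℤ, j ≤ 0 → ν j = 1)
    (hblock : ∀ n : ℕ, 1 ≤ n → ∀ t : ℕ, 1 ≤ t → t ≤ 2 * n + 10 ^ n →
      ν (((n - 1) * n + ∑ m ∈ Finset.Icc 1 (n - 1), 10 ^ m + t : ℕ)) =
        if t ≤ n then (t : ℝ)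
        else if t ≤ n + 10 ^ n then ((n : ℝ) + 1)
        else ((2 * n + 10 ^ n + 1 - t : ℕ) : ℝ)) :
    ∀ k : ℕ, 1 ≤ k →
      ν ((k * (k + 1) + ∑ ℓ ∈ Finset.Icc 1 k, 10 ^ ℓ : ℕ)) = 1 ∧
      (1 / ((k * (k + 1) + ∑ ℓ ∈ Finset.Icc 1 k, 10 ^ ℓ : ℕ) : ℝ)) *
          ∑ i ∈ Finset.Icc 1 (k * (k + 1) + ∑ ℓ ∈ Finset.Icc 1 k, 10 ^ ℓ),
            ν (((k * (k + 1) + ∑ ℓ ∈ Finset.Icc 1 k, 10 ^ ℓ : ℕ) : ℤ) - (i : ℤ)) =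
        ((2 / 6) * (k : ℝ) * ((k : ℝ) + 1) * ((k : ℝ) + 2) +
            ((9 * (k : ℝ) + 8) * 10 ^ (k + 1) - 80) / 81) /
          ((k : ℝ) * ((k : ℝ) + 1) + (10 ^ (k + 1) - 10) / 9) ∧
      (k : ℝ) / 2 <
        ((2 / 6) * (k : ℝ) * ((k : ℝ) + 1) * ((k : ℝ) + 2) +
            ((9 * (k : ℝ) + 8) * 10 ^ (k + 1) - 80) / 81) /
          ((k : ℝ) * ((k : ℝ) + 1) + (10 ^ (k + 1) - 10) / 9) := by
  intro k hk
  have hp1 : 1 ≤ 10 ^ k := Nat.one_le_pow _ _ (by norm_num)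
  have hν1 : ν ((k * (k + 1) + ∑ ℓ ∈ Finset.Icc 1 k, 10 ^ ℓ : ℕ)) = 1 :=
    nuN ν hblock k hk
  set N : ℕ := k * (k + 1) + ∑ ℓ ∈ Finset.Icc 1 k, 10 ^ ℓ with hNdef
  have hN1 : 1 ≤ N := by
    have h2 : 1 * 2 ≤ k * (k + 1) := Nat.mul_le_mul hk (by omega)
    omega
  have hB : (N : ℝ) = (k:ℝ) * ((k:ℝ) + 1) + ((10:ℝ) ^ (k+1) - 10) / 9 := by
    rw [hNdef]
    push_cast [geomCast k]
    ring
  have h10 : (10:ℝ) ≤ 10 ^ (k + 1) := by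
    calc (10:ℝ) = 10 ^ 1 := by norm_num
    _ ≤ 10 ^ (k+1) := pow_le_pow_right₀ (by norm_num) (by omega)
  have hk1 : (1:ℝ) ≤ (k:ℝ) := by exact_mod_cast hk
  have hBpos : 0 < (k:ℝ) * ((k:ℝ) + 1) + ((10:ℝ) ^ (k+1) - 10) / 9 := by nlinarith
  refine ⟨hν1, ?_, ?_⟩
  · have hrefl : ∑ i ∈ Finset.Icc 1 N, ν ((N:ℤ) - (i:ℤ))
        = ∑ j ∈ Finset.range N, ν ((j:ℕ) : ℤ) := by
      apply Finset.sum_nbij' (fun i => N - i) (fun j => N - j) <;> intro a ha <;>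
        simp [Finset.mem_Icc, Finset.mem_range] at * <;> first | omega | (congr 1; omega)
    have h2 : ∑ j ∈ Finset.range N, ν ((j:ℕ) : ℤ) = ∑ j ∈ Ioc 0 N, ν ((j:ℕ) : ℤ) := by
      apply rangeIoc N _ hN1
      simp only [Nat.cast_zero]
      rw [h0 0 le_rfl, hν1]
    have h3 := sumN ν hblock k
    rw [hrefl, h2]
    rw [hNdef] at *
    rw [h3, hB]
    ring
  · rw [lt_div_iff₀ hBpos]
    have hc : ((k:ℝ))^3 ≤ 10 ^ k := by exact_mod_cast cube_le k
    have h10k : (10:ℝ) ≤ 10 ^ k := by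
      calc (10:ℝ) = 10 ^ 1 := by norm_num
      _ ≤ 10 ^ k := pow_le_pow_right₀ (by norm_num) hk
    have hx : (10:ℝ) ^ (k+1) = 10 * 10 ^ k := by rw [pow_succ]; ring
    nlinarith [hc, hk1, h10k, mul_le_mul_of_nonneg_left hc
      (by positivity : (0:ℝ) ≤ 90 * (k:ℝ)), sq_nonneg ((k:ℝ) - 1)]
end

section
/- Let X be a Fréchet sequence space over ℤ (a subspace of 𝕂^ℤ such that convergence in X implies coordinatewise convergence) in which the canonical vectors (e_n)_{n∈ℤ} form a basis, and suppose the bilateral weighted backward shift B_w(x)_n = w_n x_{n+1} with nonzero weights is continuous on X. If for some j₀ ∈ ℤ one has liminf_{n→∞} (1/n) Σ_{k=1}^{n} d(w_{j₀−k}⋯w_{j₀−1} e_{j₀−k}, 0) = 0, then for every i ∈ ℤ one has liminf_{n→∞} (1/n) Σ_{k=1}^{n} d(w_{i−k}⋯w_{i−1} e_{i−k}, 0) = 0. -/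
/-!
The vectors `v i k = (w (i-1) ⋯ w (i-k)) • e (i-k)` satisfy `v (i+1) (k+1) = w i • v i k`, and
the F-norm `x ↦ d x 0` obeys `d (c • x) 0 ≤ max 1 ‖c‖ * d x 0`. Since the weights are nonzero, the
sequences `k ↦ d (v i k) 0` and `k ↦ d (v (i+1) k) 0` therefore dominate each other up to a shift
of the index by one and a constant factor. Neither changes the Cesàro sums by more than an
affine bound, so the Cesàro means of one have `liminf` zero iff those of the other do; induction
over `i ∈ ℤ` finishes the argument.
-/

open Filter Finset

@[to_additive]
theorem Finset.prod_Icc_succ_bot {M : Type*} [CommMonoid M] {a b : ℕ} (hab : a ≤ b + 1)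
    (f : ℕ → M) : ∏ k ∈ Icc a (b + 1), f k = f a * ∏ k ∈ Icc a b, f (k + 1) := by
  rw [← mul_prod_Ioc_eq_prod_Icc hab, ← Icc_add_one_left_eq_Ioc, ← map_add_right_Icc, prod_map]
  rfl

theorem Int.forall_of_iff_add_one {P : ℤ → Prop} (h : ∀ i, P i ↔ P (i + 1)) {j : ℤ} (hj : P j)
    (i : ℤ) : P i :=
  Int.inductionOn' i j hj (fun k _ hk => (h k).1 hk)
    (fun k _ hk => (h (k - 1)).2 (by rwa [sub_add_cancel]))

theorem Filter.liminf_eq_zero_iff_frequently_lt {α : Type*} {l : Filter α} [l.NeBot] {a : α → ℝ}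
    (h0 : ∀ n, 0 ≤ a n) (hbdd : IsBoundedUnder (· ≤ ·) l a) :
    liminf a l = 0 ↔ ∀ ε > 0, ∃ᶠ n in l, a n < ε := by
  have hbdd' : IsBoundedUnder (· ≥ ·) l a := isBoundedUnder_of ⟨0, h0⟩
  refine ⟨fun h ε hε => frequently_lt_of_liminf_lt hbdd.isCoboundedUnder_ge (h ▸ hε), fun h => ?_⟩
  refine le_antisymm (le_of_forall_pos_le_add fun ε hε => ?_)
    (le_liminf_of_le hbdd.isCoboundedUnder_ge (Eventually.of_forall h0))
  rw [zero_add]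
  exact liminf_le_of_frequently_le ((h ε hε).mono fun _ => le_of_lt) hbdd'

section Cesaro

-- At `n = 0` this is `1 / 0 * 0 = 0`.
noncomputable def cesaroMean (F : ℕ → ℝ) (n : ℕ) : ℝ := (1 / (n : ℝ)) * ∑ k ∈ Icc 1 n, F k

variable {F G : ℕ → ℝ}

theorem cesaroMean_nonneg (hF : ∀ k, 0 ≤ F k) (n : ℕ) : 0 ≤ cesaroMean F n :=
  mul_nonneg (by positivity) (sum_nonneg fun k _ => hF k)

theorem cesaroMean_le_one (hF : ∀ k, F k ≤ 1) (n : ℕ) : cesaroMean F n ≤ 1 := by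
  rcases Nat.eq_zero_or_pos n with rfl | hn
  · simp [cesaroMean]
  have hsum : ∑ k ∈ Icc 1 n, F k ≤ n := by
    simpa using sum_le_sum fun k (_ : k ∈ Icc 1 n) => hF k
  calc cesaroMean F n ≤ (1 / (n : ℝ)) * n := mul_le_mul_of_nonneg_left hsum (by positivity)
    _ = 1 := by field_simp

theorem cesaroMean_le_of_sum_le {C D : ℝ} {n : ℕ}
    (h : ∑ k ∈ Icc 1 n, G k ≤ D + C * ∑ k ∈ Icc 1 n, F k) :
    cesaroMean G n ≤ D / n + C * cesaroMean F n := by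
  calc cesaroMean G n ≤ (1 / (n : ℝ)) * (D + C * ∑ k ∈ Icc 1 n, F k) :=
        mul_le_mul_of_nonneg_left h (by positivity)
    _ = D / n + C * cesaroMean F n := by rw [cesaroMean]; ring

theorem sum_Icc_le_of_le_shift_left {C : ℝ} (hC : 0 ≤ C) (hF : ∀ k, 0 ≤ F k) (hG : ∀ k, G k ≤ 1)
    (hGF : ∀ k, G (k + 1) ≤ C * F k) (n : ℕ) :
    ∑ k ∈ Icc 1 n, G k ≤ 1 + C * ∑ k ∈ Icc 1 n, F k := by
  obtain _ | n := n
  · simp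
  have hmono : ∑ k ∈ Icc 1 n, F k ≤ ∑ k ∈ Icc 1 (n + 1), F k :=
    sum_le_sum_of_subset_of_nonneg (Icc_subset_Icc_right n.le_succ) fun k _ _ => hF k
  calc ∑ k ∈ Icc 1 (n + 1), G k = G 1 + ∑ k ∈ Icc 1 n, G (k + 1) := sum_Icc_succ_bot (by omega) G
    _ ≤ 1 + C * ∑ k ∈ Icc 1 n, F k := by
        rw [mul_sum]; exact add_le_add (hG 1) (sum_le_sum fun k _ => hGF k)
    _ ≤ 1 + C * ∑ k ∈ Icc 1 (n + 1), F k := by gcongr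

theorem sum_Icc_le_of_le_shift_right {C : ℝ} (hC : 0 ≤ C) (hF0 : ∀ k, 0 ≤ F k)
    (hF1 : ∀ k, F k ≤ 1) (hGF : ∀ k, G k ≤ C * F (k + 1)) (n : ℕ) :
    ∑ k ∈ Icc 1 n, G k ≤ C + C * ∑ k ∈ Icc 1 n, F k := by
  have hshift : ∑ k ∈ Icc 1 n, F (k + 1) ≤ 1 + ∑ k ∈ Icc 1 n, F k := by
    have h := (sum_Icc_succ_bot (a := 1) (b := n) (by omega) F).symm.trans
      (sum_Icc_succ_top (by omega) F)
    linarith [hF0 1, hF1 (n + 1)]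
  calc ∑ k ∈ Icc 1 n, G k ≤ C * ∑ k ∈ Icc 1 n, F (k + 1) := by
        rw [mul_sum]; exact sum_le_sum fun k _ => hGF k
    _ ≤ C * (1 + ∑ k ∈ Icc 1 n, F k) := by gcongr
    _ = C + C * ∑ k ∈ Icc 1 n, F k := by ring

theorem liminf_cesaroMean_eq_zero_of_sum_le (hF0 : ∀ k, 0 ≤ F k) (hF1 : ∀ k, F k ≤ 1)
    (hG0 : ∀ k, 0 ≤ G k) (hG1 : ∀ k, G k ≤ 1) {C D : ℝ} (hC : 0 ≤ C)
    (hGF : ∀ n, ∑ k ∈ Icc 1 n, G k ≤ D + C * ∑ k ∈ Icc 1 n, F k)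
    (hF : liminf (cesaroMean F) atTop = 0) : liminf (cesaroMean G) atTop = 0 := by
  have hbdd : ∀ {H : ℕ → ℝ}, (∀ k, H k ≤ 1) → IsBoundedUnder (· ≤ ·) atTop (cesaroMean H) :=
    fun hH => isBoundedUnder_of ⟨1, cesaroMean_le_one hH⟩
  rw [liminf_eq_zero_iff_frequently_lt (cesaroMean_nonneg hF0) (hbdd hF1)] at hF
  rw [liminf_eq_zero_iff_frequently_lt (cesaroMean_nonneg hG0) (hbdd hG1)]
  intro ε hε
  have hδ : 0 < ε / (2 * (C + 1)) := by positivity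
  have hCδ : C * (ε / (2 * (C + 1))) ≤ ε / 2 := by
    rw [mul_div_assoc', div_le_div_iff₀ (by positivity) two_pos]
    nlinarith
  have hD : ∀ᶠ n : ℕ in atTop, D / n < ε / 2 :=
    (tendsto_const_div_atTop_nhds_zero_nat D).eventually (gt_mem_nhds (half_pos hε))
  refine ((hF _ hδ).and_eventually hD).mono fun n ⟨hFn, hDn⟩ => ?_
  calc cesaroMean G n ≤ D / n + C * cesaroMean F n := cesaroMean_le_of_sum_le (hGF n)
    _ ≤ D / n + C * (ε / (2 * (C + 1))) := by gcongr
    _ < ε := by linarith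

theorem liminf_cesaroMean_eq_zero_iff_of_shift (hF0 : ∀ k, 0 ≤ F k) (hF1 : ∀ k, F k ≤ 1)
    (hG0 : ∀ k, 0 ≤ G k) (hG1 : ∀ k, G k ≤ 1) {C C' : ℝ} (hC : 0 ≤ C) (hC' : 0 ≤ C')
    (hGF : ∀ k, G (k + 1) ≤ C * F k) (hFG : ∀ k, F k ≤ C' * G (k + 1)) :
    liminf (cesaroMean F) atTop = 0 ↔ liminf (cesaroMean G) atTop = 0 :=
  ⟨liminf_cesaroMean_eq_zero_of_sum_le hF0 hF1 hG0 hG1 hC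
      (sum_Icc_le_of_le_shift_left hC hF0 hG1 hGF),
    liminf_cesaroMean_eq_zero_of_sum_le hG0 hG1 hF0 hF1 hC'
      (sum_Icc_le_of_le_shift_right hC' hG0 hG1 hFG)⟩

end Cesaro

theorem min_one_mul_le {a t : ℝ} (ha : 0 ≤ a) (ht : 0 ≤ t) :
    min 1 (a * t) ≤ max 1 a * min 1 t := by
  rcases le_total a 1 with h | h
  · calc min 1 (a * t) ≤ min 1 t := min_le_min le_rfl (mul_le_of_le_one_left ht h)
      _ ≤ max 1 a * min 1 t := le_mul_of_one_le_left (le_min zero_le_one ht) (le_max_left 1 a)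
  · calc min 1 (a * t) ≤ min a (a * t) := min_le_min h le_rfl
      _ = max 1 a * min 1 t := by rw [max_eq_right h, mul_min_of_nonneg _ _ ha, mul_one]

section FrechetNorm

variable {𝕜 E : Type*} [SeminormedRing 𝕜] [AddGroup E] [SMul 𝕜 E]

/-- `d x 0` for the Fréchet metric `d` built from the seminorms `p 1, p 2, …`. -/
noncomputable def frechetNorm (p : ℕ → Seminorm 𝕜 E) (x : E) : ℝ :=
  ∑' k : ℕ, (1 / 2 : ℝ) ^ (k + 1) * min 1 (p (k + 1) x)

variable (p : ℕ → Seminorm 𝕜 E)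

theorem frechetNorm_term_nonneg (x : E) (k : ℕ) :
    0 ≤ (1 / 2 : ℝ) ^ (k + 1) * min 1 (p (k + 1) x) :=
  mul_nonneg (by positivity) (le_min zero_le_one (apply_nonneg _ _))

theorem frechetNorm_term_le (x : E) (k : ℕ) :
    (1 / 2 : ℝ) ^ (k + 1) * min 1 (p (k + 1) x) ≤ (1 / 2 : ℝ) ^ (k + 1) :=
  mul_le_of_le_one_right (by positivity) (min_le_left _ _)

theorem summable_half_pow_succ : Summable fun k : ℕ => (1 / 2 : ℝ) ^ (k + 1) := by
  simpa only [pow_succ] using summable_geometric_two.mul_right (1 / 2)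

theorem summable_frechetNorm (x : E) :
    Summable fun k : ℕ => (1 / 2 : ℝ) ^ (k + 1) * min 1 (p (k + 1) x) :=
  summable_half_pow_succ.of_nonneg_of_le (frechetNorm_term_nonneg p x) (frechetNorm_term_le p x)

theorem frechetNorm_nonneg (x : E) : 0 ≤ frechetNorm p x :=
  tsum_nonneg (frechetNorm_term_nonneg p x)

theorem frechetNorm_le_one (x : E) : frechetNorm p x ≤ 1 := by
  calc frechetNorm p x ≤ ∑' k : ℕ, (1 / 2 : ℝ) ^ (k + 1) :=
        (summable_frechetNorm p x).tsum_le_tsum (frechetNorm_term_le p x) summable_half_pow_succ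
    _ = 1 := by simp only [pow_succ, tsum_mul_right, one_div, tsum_geometric_inv_two]; norm_num

theorem frechetNorm_smul_le (c : 𝕜) (x : E) :
    frechetNorm p (c • x) ≤ max 1 ‖c‖ * frechetNorm p x := by
  rw [frechetNorm, frechetNorm, ← tsum_mul_left]
  refine (summable_frechetNorm p _).tsum_le_tsum (fun k => ?_)
    ((summable_frechetNorm p x).mul_left _)
  rw [map_smul_eq_mul, mul_left_comm]
  exact mul_le_mul_of_nonneg_left (min_one_mul_le (norm_nonneg c) (apply_nonneg _ _))
    (by positivity)

end FrechetNorm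

/-- `shiftOrbit w e i k = (B_w)^k (e i)` for the weighted backward shift `B_w`. -/
def shiftOrbit {R M : Type*} [CommMonoid R] [MulAction R M] (w : ℤ → R) (e : ℤ → M) (i : ℤ)
    (k : ℕ) : M :=
  (∏ j ∈ Icc 1 k, w (i - j)) • e (i - k)

theorem shiftOrbit_add_one {R M : Type*} [CommMonoid R] [MulAction R M] (w : ℤ → R)
    (e : ℤ → M) (i : ℤ) (k : ℕ) :
    shiftOrbit w e (i + 1) (k + 1) = w i • shiftOrbit w e i k := by
  simp only [shiftOrbit, prod_Icc_succ_bot (by omega : 1 ≤ k + 1), smul_smul]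
  congr 2
  · simp
  · refine prod_congr rfl fun j _ => ?_
    push_cast; ring_nf
  · push_cast; ring_nf

theorem stmt_8_general {𝕂 : Type*} [RCLike 𝕂] (X : Submodule 𝕂 (ℤ → 𝕂))
    (p : ℕ → Seminorm 𝕂 X)
    (d : X → X → ℝ)
    (hd : ∀ x y : X, d x y = ∑' k : ℕ, (1 / 2 : ℝ) ^ (k + 1) * min 1 (p (k + 1) (x - y)))
    (e : ℤ → X)
    (w : ℤ → 𝕂) (hw : ∀ n, w n ≠ 0)
    (j₀ : ℤ)
    (h0 : liminf (fun n : ℕ =>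
        (1 / (n : ℝ)) * ∑ k ∈ Finset.Icc 1 n,
          d ((∏ j ∈ Finset.Icc 1 k, w (j₀ - (j : ℤ))) • e (j₀ - (k : ℤ))) 0) atTop = 0) :
    ∀ i : ℤ, liminf (fun n : ℕ =>
        (1 / (n : ℝ)) * ∑ k ∈ Finset.Icc 1 n,
          d ((∏ j ∈ Finset.Icc 1 k, w (i - (j : ℤ))) • e (i - (k : ℤ))) 0) atTop = 0 := by
  have hd0 : ∀ x : X, d x 0 = frechetNorm p x := fun x => by rw [hd, sub_zero, frechetNorm]
  set F : ℤ → ℕ → ℝ := fun i k => frechetNorm p (shiftOrbit w e i k)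
  have hF : ∀ i, (fun k : ℕ => d ((∏ j ∈ Icc 1 k, w (i - (j : ℤ))) • e (i - (k : ℤ))) 0) = F i :=
    fun i => funext fun k => hd0 _
  have hup : ∀ i k, F (i + 1) (k + 1) ≤ max 1 ‖w i‖ * F i k := fun i k => by
    simp only [F, shiftOrbit_add_one]; exact frechetNorm_smul_le p _ _
  have hdown : ∀ i k, F i k ≤ max 1 ‖(w i)⁻¹‖ * F (i + 1) (k + 1) := fun i k => by
    simp only [F, shiftOrbit_add_one]
    conv_lhs => rw [← inv_smul_smul₀ (hw i) (shiftOrbit w e i k)]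
    exact frechetNorm_smul_le p _ _
  have step : ∀ i,
      liminf (cesaroMean (F i)) atTop = 0 ↔ liminf (cesaroMean (F (i + 1))) atTop = 0 :=
    fun i => liminf_cesaroMean_eq_zero_iff_of_shift (fun _ => frechetNorm_nonneg p _)
      (fun _ => frechetNorm_le_one p _) (fun _ => frechetNorm_nonneg p _)
      (fun _ => frechetNorm_le_one p _) (zero_le_one.trans (le_max_left _ _))
      (zero_le_one.trans (le_max_left _ _)) (hup i) (hdown i)
  intro i
  rw [hF] at h0 ⊢
  exact Int.forall_of_iff_add_one step h0 i

theorem stmt_8 {𝕂 : Type*} [RCLike 𝕂] (X : Submodule 𝕂 (ℤ → 𝕂))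
    (p : ℕ → Seminorm 𝕂 X) (hp : Monotone p)
    (d : X → X → ℝ)
    (hd : ∀ x y : X, d x y = ∑' k : ℕ, (1 / 2 : ℝ) ^ (k + 1) * min 1 (p (k + 1) (x - y)))
    (e : ℤ → X) (he : ∀ n : ℤ, (e n : ℤ → 𝕂) = fun j => if j = n then 1 else 0)
    (w : ℤ → 𝕂) (hw : ∀ n, w n ≠ 0)
    (B : X →ₗ[𝕂] X)
    (hB : ∀ (x : X) (n : ℤ), (B x : ℤ → 𝕂) n = w n * (x : ℤ → 𝕂) (n + 1))
    (hBcont : ∀ ε > (0 : ℝ), ∃ δ > (0 : ℝ), ∀ x : X, d x 0 < δ → d (B x) 0 < ε)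
    (j₀ : ℤ)
    (h0 : liminf (fun n : ℕ =>
        (1 / (n : ℝ)) * ∑ k ∈ Finset.Icc 1 n,
          d ((∏ j ∈ Finset.Icc 1 k, w (j₀ - (j : ℤ))) • e (j₀ - (k : ℤ))) 0) atTop = 0) :
    ∀ i : ℤ, liminf (fun n : ℕ =>
        (1 / (n : ℝ)) * ∑ k ∈ Finset.Icc 1 n,
          d ((∏ j ∈ Finset.Icc 1 k, w (i - (j : ℤ))) • e (i - (k : ℤ))) 0) atTop = 0 :=
  stmt_8_general X p d hd e w hw j₀ h0
end

section
/- Let w : ℤ → ℝ be given by the block structure: w_n = 2 for n ≥ 0, and on the negative integers w consists of consecutive blocks B_n (n = 1, 2, 3, ...) reading leftwards from −1, where B_n has 2n entries: n entries equal to 2^{(−1)^{n+1}} followed (further left) by n entries equal to 2^{(−1)^n}. Then for every i ∈ ℤ there is a constant C > 0 such that for all n ∈ ℕ with n − i ∈ ⋃_{m∈ℕ}(−I_{2m−1}) (the union of odd blocks' index sets shifted by i), the product |w_{i−n} ⋯ w_{i−1}| ≥ C. -/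
/-!
Every weight is `2` or `1/2`, and the weights of each block `B_n` multiply to `1`, so the partial
products `P N = w_{-1} ⋯ w_{-N}` return to `1` at the end of every block. In an odd block the
weights `2` come first, so `P` climbs from `1` and then descends back to `1`: hence `P ≥ 1` there.
Moving the right end of the product from `0` to `i` changes it by a factor at most `2 ^ |i|`.
-/

open Finset

theorem prod_Icc_one_sub_eq_prod_Ico {M : Type*} [CommMonoid M] (f : ℤ → M) (i : ℤ) (n : ℕ) :
    ∏ j ∈ Icc 1 n, f (i - j) = ∏ t ∈ Ico (i - n) i, f t :=
  prod_nbij' (fun j ↦ i - j) (fun t ↦ (i - t).toNat)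
    (fun j hj ↦ by simp only [mem_Icc, mem_Ico] at hj ⊢; omega)
    (fun t ht ↦ by simp only [mem_Icc, mem_Ico] at ht ⊢; omega)
    (fun j _ ↦ by simp)
    (fun t ht ↦ by simp only [mem_Ico] at ht; omega)
    (fun _ _ ↦ rfl)

theorem Int.prod_Ico_consecutive {M : Type*} [CommMonoid M] (f : ℤ → M) {a b c : ℤ}
    (hab : a ≤ b) (hbc : b ≤ c) :
    (∏ t ∈ Ico a b, f t) * ∏ t ∈ Ico b c, f t = ∏ t ∈ Ico a c, f t := by
  rw [← prod_union (Ico_disjoint_Ico_consecutive a b c), Ico_union_Ico_eq_Ico hab hbc]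

theorem prod_Ico_le_pow_natAbs_mul_prod_Ico {f : ℤ → ℝ} {K : ℝ} (hK : 0 < K)
    (hf : ∀ t, K⁻¹ ≤ f t ∧ f t ≤ K) {a b c : ℤ} (hab : a ≤ b) (hac : a ≤ c) :
    ∏ t ∈ Ico a b, f t ≤ K ^ (c - b).natAbs * ∏ t ∈ Ico a c, f t := by
  have hpos : ∀ t, 0 < f t := fun t ↦ (inv_pos.2 hK).trans_le (hf t).1
  rcases le_total b c with hbc | hcb
  · have hlow : (K ^ (c - b).natAbs)⁻¹ ≤ ∏ t ∈ Ico b c, f t := by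
      rw [← inv_pow, show (c - b).natAbs = #(Ico b c) by rw [Int.card_Ico]; omega, ← prod_const]
      exact prod_le_prod (fun _ _ ↦ by positivity) fun t _ ↦ (hf t).1
    rw [← Int.prod_Ico_consecutive f hab hbc, mul_left_comm]
    refine le_mul_of_one_le_right (prod_pos fun t _ ↦ hpos t).le ?_
    rwa [← inv_le_iff_one_le_mul₀' (by positivity)]
  · have hup : ∏ t ∈ Ico c b, f t ≤ K ^ (c - b).natAbs := by
      rw [show (c - b).natAbs = #(Ico c b) by rw [Int.card_Ico]; omega, ← prod_const]
      exact prod_le_prod (fun t _ ↦ (hpos t).le) fun t _ ↦ (hf t).2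
    rw [← Int.prod_Ico_consecutive f hac hcb, mul_comm]
    exact mul_le_mul_of_nonneg_right hup (prod_pos fun t _ ↦ hpos t).le

theorem exists_mul_pred_lt_le_mul_succ (k : ℕ) (hk : 1 ≤ k) :
    ∃ n, 1 ≤ n ∧ n * (n - 1) < k ∧ k ≤ n * (n + 1) := by
  classical
  have hex : ∃ n, k ≤ n * (n + 1) := ⟨k, by nlinarith⟩
  have hn : Nat.find hex ≠ 0 := fun h ↦ by
    have := Nat.find_spec hex
    rw [h] at this
    omega
  refine ⟨Nat.find hex, by omega, ?_, Nat.find_spec hex⟩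
  have := Nat.find_min hex (show Nat.find hex - 1 < Nat.find hex by omega)
  rw [Nat.sub_add_cancel (by omega), mul_comm] at this
  omega

theorem two_zpow_neg_one_pow_of_even {n : ℕ} (hn : Even n) : (2 : ℝ) ^ ((-1 : ℤ) ^ n) = 2 := by
  rw [hn.neg_one_pow, zpow_one]

theorem two_zpow_neg_one_pow_of_odd {n : ℕ} (hn : Odd n) : (2 : ℝ) ^ ((-1 : ℤ) ^ n) = 2⁻¹ := by
  rw [hn.neg_one_pow, zpow_neg_one]

theorem two_zpow_neg_one_pow_succ_mul (n : ℕ) :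
    (2 : ℝ) ^ ((-1 : ℤ) ^ (n + 1)) * 2 ^ ((-1 : ℤ) ^ n) = 1 := by
  rw [← zpow_add₀ two_ne_zero, pow_succ, mul_neg_one, neg_add_cancel, zpow_zero]

section Blocks

variable {w : ℤ → ℝ}
    (hblock₁ : ∀ n : ℕ, 1 ≤ n → ∀ j : ℕ, n * (n - 1) < j → j ≤ n * n →
      w (-(j : ℤ)) = (2 : ℝ) ^ ((-1 : ℤ) ^ (n + 1)))
    (hblock₂ : ∀ n : ℕ, 1 ≤ n → ∀ j : ℕ, n * n < j → j ≤ n * (n + 1) →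
      w (-(j : ℤ)) = (2 : ℝ) ^ ((-1 : ℤ) ^ n))
include hblock₁ hblock₂

theorem prod_Ioc_block_eq_one {n : ℕ} (hn : 1 ≤ n) :
    ∏ k ∈ Ioc (n * (n - 1)) (n * (n + 1)), w (-(k : ℤ)) = 1 := by
  have hsq : n * (n - 1) + n = n * n := by
    rw [← Nat.mul_succ, Nat.succ_eq_add_one, Nat.sub_add_cancel hn]
  have hsucc : n * n + n = n * (n + 1) := by ring
  have hfirst : ∏ k ∈ Ioc (n * (n - 1)) (n * n), w (-(k : ℤ)) = (2 ^ ((-1 : ℤ) ^ (n + 1))) ^ n := by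
    rw [prod_congr rfl fun k hk ↦ hblock₁ n hn k (mem_Ioc.1 hk).1 (mem_Ioc.1 hk).2, prod_const,
      Nat.card_Ioc, ← hsq, Nat.add_sub_cancel_left]
  have hsecond : ∏ k ∈ Ioc (n * n) (n * (n + 1)), w (-(k : ℤ)) = (2 ^ ((-1 : ℤ) ^ n)) ^ n := by
    rw [prod_congr rfl fun k hk ↦ hblock₂ n hn k (mem_Ioc.1 hk).1 (mem_Ioc.1 hk).2, prod_const,
      Nat.card_Ioc, ← hsucc, Nat.add_sub_cancel_left]
  rw [← prod_Ioc_consecutive _ (by omega : n * (n - 1) ≤ n * n) (by omega), hfirst, hsecond,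
    ← mul_pow, two_zpow_neg_one_pow_succ_mul, one_pow]

theorem prod_Ioc_zero_mul_succ_eq_one (n : ℕ) :
    ∏ k ∈ Ioc 0 (n * (n + 1)), w (-(k : ℤ)) = 1 := by
  induction n with
  | zero => simp
  | succ n ih =>
    have hblock := prod_Ioc_block_eq_one hblock₁ hblock₂ (Nat.le_add_left 1 n)
    rw [Nat.add_sub_cancel, mul_comm] at hblock
    have hle : n * (n + 1) ≤ (n + 1) * (n + 1 + 1) := by nlinarith
    rw [← prod_Ioc_consecutive _ (Nat.zero_le _) hle, ih, hblock, one_mul]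

theorem neg_weight_eq_two_or_inv {k : ℕ} (hk : 1 ≤ k) : w (-(k : ℤ)) = 2 ∨ w (-(k : ℤ)) = 2⁻¹ := by
  obtain ⟨n, hn, hlo, hhi⟩ := exists_mul_pred_lt_le_mul_succ k hk
  obtain ⟨e, he⟩ : ∃ e : ℕ, w (-(k : ℤ)) = 2 ^ ((-1 : ℤ) ^ e) := by
    rcases le_or_gt k (n * n) with hk' | hk'
    · exact ⟨n + 1, hblock₁ n hn k hlo hk'⟩
    · exact ⟨n, hblock₂ n hn k hk' hhi⟩
  rcases Nat.even_or_odd e with he' | he'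
  · exact .inl (he.trans (two_zpow_neg_one_pow_of_even he'))
  · exact .inr (he.trans (two_zpow_neg_one_pow_of_odd he'))

theorem one_le_prod_Ioc_of_odd_block {n N : ℕ} (hn : Odd n) (hlo : n * (n - 1) < N)
    (hhi : N ≤ n * (n + 1)) : 1 ≤ ∏ k ∈ Ioc 0 N, w (-(k : ℤ)) := by
  have hn1 : 1 ≤ n := hn.pos
  rcases le_or_gt N (n * n) with hN | hN
  · have hstart : ∏ k ∈ Ioc 0 (n * (n - 1)), w (-(k : ℤ)) = 1 := by
      simpa [Nat.sub_add_cancel hn1, mul_comm] using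
        prod_Ioc_zero_mul_succ_eq_one hblock₁ hblock₂ (n - 1)
    rw [← prod_Ioc_consecutive _ (Nat.zero_le _) hlo.le, hstart, one_mul]
    refine one_le_prod fun k hk ↦ ?_
    rw [hblock₁ n hn1 k (mem_Ioc.1 hk).1 ((mem_Ioc.1 hk).2.trans hN),
      two_zpow_neg_one_pow_of_even hn.add_one]
    norm_num
  · have hrest : ∀ k ∈ Ioc N (n * (n + 1)), w (-(k : ℤ)) = 2⁻¹ := fun k hk ↦ by
      rw [hblock₂ n hn1 k (hN.trans (mem_Ioc.1 hk).1) (mem_Ioc.1 hk).2,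
        two_zpow_neg_one_pow_of_odd hn]
    have hpos : 0 < ∏ k ∈ Ioc N (n * (n + 1)), w (-(k : ℤ)) :=
      prod_pos fun k hk ↦ by rw [hrest k hk]; norm_num
    have hle : ∏ k ∈ Ioc N (n * (n + 1)), w (-(k : ℤ)) ≤ 1 :=
      prod_le_one (fun k hk ↦ by rw [hrest k hk]; norm_num) fun k hk ↦ by rw [hrest k hk]; norm_num
    have hend := prod_Ioc_zero_mul_succ_eq_one hblock₁ hblock₂ n
    rw [← prod_Ioc_consecutive _ (Nat.zero_le N) hhi] at hend
    rw [eq_inv_of_mul_eq_one_left hend]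
    exact (one_le_inv₀ hpos).2 hle

theorem weight_mem_Icc (hpos : ∀ m : ℤ, 0 ≤ m → w m = 2) (t : ℤ) : 2⁻¹ ≤ w t ∧ w t ≤ 2 := by
  rcases le_or_gt 0 t with ht | ht
  · rw [hpos t ht]; norm_num
  · obtain ⟨k, rfl⟩ : ∃ k : ℕ, t = -(k : ℤ) := ⟨t.natAbs, by omega⟩
    rcases neg_weight_eq_two_or_inv hblock₁ hblock₂ (k := k) (by omega) with h | h <;>
      rw [h] <;> norm_num

end Blocks

theorem stmt_16 (w : ℤ → ℝ)
    (hpos : ∀ m : ℤ, 0 ≤ m → w m = 2)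
    (hblock₁ : ∀ n : ℕ, 1 ≤ n → ∀ j : ℕ, n * (n - 1) < j → j ≤ n * n →
      w (-(j : ℤ)) = (2 : ℝ) ^ ((-1 : ℤ) ^ (n + 1)))
    (hblock₂ : ∀ n : ℕ, 1 ≤ n → ∀ j : ℕ, n * n < j → j ≤ n * (n + 1) →
      w (-(j : ℤ)) = (2 : ℝ) ^ ((-1 : ℤ) ^ n)) :
    ∀ i : ℤ, ∃ C > (0 : ℝ), ∀ n : ℕ, 1 ≤ n →
      (∃ m : ℕ, 1 ≤ m ∧
        (2 * (m : ℤ) - 1) * (2 * (m : ℤ) - 2) < (n : ℤ) - i ∧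
        (n : ℤ) - i ≤ (2 * (m : ℤ) - 1) * (2 * (m : ℤ))) →
      C ≤ |∏ j ∈ Finset.Icc 1 n, w (i - (j : ℤ))| := by
  intro i
  refine ⟨(2 ^ i.natAbs)⁻¹, by positivity, ?_⟩
  rintro n - ⟨m, hm, hlo, hhi⟩
  have hni : i ≤ n := by nlinarith
  obtain ⟨N, hN⟩ : ∃ N : ℕ, (N : ℤ) = n - i := ⟨(n - i : ℤ).toNat, by omega⟩
  have hodd : 1 ≤ ∏ k ∈ Ioc 0 N, w (-(k : ℤ)) := by
    refine one_le_prod_Ioc_of_odd_block hblock₁ hblock₂ (n := 2 * m - 1) ⟨m - 1, by omega⟩ ?_ ?_ <;>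
      zify [show 1 ≤ 2 * m - 1 by omega, show 1 ≤ 2 * m by omega] <;> linarith
  have hshift : ∏ t ∈ Ico (i - n) 0, w t = ∏ k ∈ Ioc 0 N, w (-(k : ℤ)) := by
    rw [show i - n = 0 - (N : ℤ) by omega, ← prod_Icc_one_sub_eq_prod_Ico,
      ← Icc_add_one_left_eq_Ioc]
    simp
  have hcmp := prod_Ico_le_pow_natAbs_mul_prod_Ico two_pos (weight_mem_Icc hblock₁ hblock₂ hpos)
    (b := 0) (c := i) (by omega) (by omega : i - n ≤ i)
  rw [hshift, sub_zero, ← prod_Icc_one_sub_eq_prod_Ico] at hcmp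
  rw [inv_le_iff_one_le_mul₀' (by positivity)]
  exact (hodd.trans hcmp).trans (mul_le_mul_of_nonneg_left (le_abs_self _) (by positivity))
end
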